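/- arXiv:1409.3040 — 10 statements merged into one kernel-verified Lean document; each statement's English description precedes it below -/
import Mathlib

section
/- Let 0 < δ < 1 and let ξ₁ = (1+√(1-(1-δ)²))/(1-δ). Suppose f : ℤ≤0 → ℝ satisfies f(x) = (1-δ)·(f(x-1)+f(x+1))/2 for all integers x < 0, f(0) = (1-δ)·(f(-1)+1/2), f is nonnegative, and f(x) grows at most linearly in |x| (i.e., there exist constants a,b with f(x) ≤ a|x| + b). Then f(x) = ξ₁ˣ/(ξ₁ - 1/ξ₁) for all x ≤ 0; in particular f(0) = (1-δ)/(2√(1-(1-δ)²)). -/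
set_option maxHeartbeats 1000000 in
theorem stmt_1 (δ : ℝ) (hδ0 : 0 < δ) (hδ1 : δ < 1)
    (ξ₁ : ℝ) (hξ₁ : ξ₁ = (1 + Real.sqrt (1 - (1 - δ) ^ 2)) / (1 - δ))
    (f : ℤ → ℝ)
    (hrec : ∀ x : ℤ, x < 0 → f x = (1 - δ) * (f (x - 1) + f (x + 1)) / 2)
    (h0 : f 0 = (1 - δ) * (f (-1) + 1 / 2))
    (hnonneg : ∀ x : ℤ, x ≤ 0 → 0 ≤ f x)
    (hlin : ∃ a b : ℝ, ∀ x : ℤ, x ≤ 0 → f x ≤ a * |(x : ℝ)| + b) :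
    (∀ x : ℤ, x ≤ 0 → f x = ξ₁ ^ x / (ξ₁ - 1 / ξ₁)) ∧
      f 0 = (1 - δ) / (2 * Real.sqrt (1 - (1 - δ) ^ 2)) := by
  have hε0 : (0:ℝ) < 1 - δ := by linarith
  have hε1 : (1:ℝ) - δ < 1 := by linarith
  have h1ε2 : (0:ℝ) < 1 - (1 - δ)^2 := by nlinarith
  obtain ⟨s, hsdef⟩ : ∃ s : ℝ, s = Real.sqrt (1 - (1 - δ)^2) := ⟨_, rfl⟩
  have hs0 : 0 < s := hsdef ▸ Real.sqrt_pos.mpr h1ε2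
  have hs2 : s^2 = 1 - (1 - δ)^2 := hsdef ▸ Real.sq_sqrt h1ε2.le
  have hs1 : s < 1 := by nlinarith
  obtain ⟨ξ₂, hξ₂def⟩ : ∃ t : ℝ, t = (1 - s)/(1 - δ) := ⟨_, rfl⟩
  have hξ₁v : ξ₁ = (1 + s)/(1 - δ) := by rw [hξ₁, hsdef]
  have hξ₁pos : 0 < ξ₁ := by rw [hξ₁v]; positivity
  have hξ₁gt : 1 < ξ₁ := by
    rw [hξ₁v, lt_div_iff₀ hε0]; nlinarith
  have hξ₂pos : 0 < ξ₂ := hξ₂def ▸ div_pos (by linarith) hε0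
  have hprod : ξ₁ * ξ₂ = 1 := by
    rw [hξ₁v, hξ₂def]
    field_simp
    nlinarith [hs2]
  have hξ₁ne : ξ₁ ≠ 0 := ne_of_gt hξ₁pos
  have hξ₂inv : ξ₂ = ξ₁⁻¹ := by
    field_simp
    linarith [hprod]
  have hξ₂lt1 : ξ₂ < 1 := by
    rw [hξ₂inv]
    exact inv_lt_one_of_one_lt₀ hξ₁gt
  have hsum : (1 - δ) * (ξ₁ + ξ₂) = 2 := by
    rw [hξ₁v, hξ₂def]
    field_simp
    ring
  obtain ⟨D, hDdef⟩ : ∃ d : ℝ, d = ξ₁ - ξ₂ := ⟨_, rfl⟩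
  have hDpos : 0 < D := by
    have : ξ₂ < ξ₁ := lt_trans hξ₂lt1 hξ₁gt
    rw [hDdef]; linarith
  have hDne : D ≠ 0 := ne_of_gt hDpos
  have hDval : D * (1 - δ) = 2 * s := by
    rw [hDdef, hξ₁v, hξ₂def]; field_simp; ring
  -- particular solution
  obtain ⟨p, hp⟩ : ∃ p : ℤ → ℝ, ∀ x, p x = ξ₁ ^ x / D := ⟨_, fun _ => rfl⟩
  have hzpow_pos : ∀ x : ℤ, 0 < ξ₁ ^ x := fun x => zpow_pos hξ₁pos x
  have hprec : ∀ x : ℤ, p x = (1 - δ) * (p (x - 1) + p (x + 1)) / 2 := by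
    intro x
    have h1 : ξ₁ ^ (x - 1) = ξ₁ ^ x * ξ₂ := by
      rw [hξ₂inv, zpow_sub_one₀ hξ₁ne]
    have h2 : ξ₁ ^ (x + 1) = ξ₁ ^ x * ξ₁ := by
      rw [zpow_add_one₀ hξ₁ne]
    rw [hp, hp, hp, h1, h2]
    linear_combination (-(ξ₁ ^ x / (2 * D))) * hsum
  obtain ⟨g, hg⟩ : ∃ g : ℤ → ℝ, ∀ x, g x = f x - p x := ⟨_, fun _ => rfl⟩
  have hgrec : ∀ x : ℤ, x < 0 → (1 - δ) * g (x - 1) = 2 * g x - (1 - δ) * g (x + 1) := by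
    intro x hx
    have h1 := hrec x hx
    have h2 := hprec x
    rw [hg, hg, hg]
    linarith
  obtain ⟨B, hBdef⟩ : ∃ u : ℝ, u = (g (-1) - ξ₂ * g 0)/D := ⟨_, rfl⟩
  obtain ⟨A, hAdef⟩ : ∃ v : ℝ, v = g 0 - B := ⟨_, rfl⟩
  have hr1 : (1 - δ) * ξ₁^2 = 2*ξ₁ - (1 - δ) := by
    linear_combination ξ₁ * hsum - (1 - δ) * hprod
  have hr2 : (1 - δ) * ξ₂^2 = 2*ξ₂ - (1 - δ) := by
    linear_combination ξ₂ * hsum - (1 - δ) * hprod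
  have key2 : ∀ n : ℕ, g (-(n:ℤ)) = A*ξ₂^n + B*ξ₁^n ∧
      g (-(n:ℤ) - 1) = A*ξ₂^(n+1) + B*ξ₁^(n+1) := by
    intro n
    induction n with
    | zero =>
      constructor
      · rw [show (-(↑(0:ℕ):ℤ)) = 0 by norm_num, hAdef]
        ring
      · have hDne' : ξ₁ - ξ₂ ≠ 0 := by rw [← hDdef]; exact hDne
        rw [show (-(↑(0:ℕ):ℤ) - 1) = (-1 : ℤ) by norm_num, pow_one, pow_one,
          hAdef, hBdef, hDdef]
        field_simp
        ring
    | succ n ih =>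
      obtain ⟨ih1, ih2⟩ := ih
      have hcast : (-(↑(n+1):ℤ)) = -(n:ℤ) - 1 := by push_cast; ring
      constructor
      · rw [hcast]; exact ih2
      · have hx : (-(n:ℤ) - 1) < 0 := by omega
        have hrec' := hgrec _ hx
        have e1 : (-(n:ℤ) - 1 - 1) = -(↑(n+1):ℤ) - 1 := by push_cast; ring
        have e2 : (-(n:ℤ) - 1 + 1) = -(n:ℤ) := by ring
        rw [e1, e2, ih1, ih2] at hrec'
        have hgoal : (1 - δ) * g (-(↑(n+1):ℤ) - 1) =
            (1 - δ) * (A*ξ₂^(n+1+1) + B*ξ₁^(n+1+1)) := by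
          rw [hrec']
          linear_combination (-(A*ξ₂^n)) * hr2 + (-(B*ξ₁^n)) * hr1
        exact mul_left_cancel₀ (ne_of_gt hε0) hgoal
  have key : ∀ n : ℕ, g (-(n:ℤ)) = A*ξ₂^n + B*ξ₁^n := fun n => (key2 n).1
  -- Kill B using the linear growth bound
  obtain ⟨a, b, hab⟩ := hlin
  have hzpow_le : ∀ n : ℕ, ξ₁ ^ (-(n:ℤ)) ≤ 1 := by
    intro n
    rw [zpow_neg, zpow_natCast]
    exact inv_le_one_of_one_le₀ (one_le_pow₀ hξ₁gt.le)
  have hgbound : ∀ n : ℕ, |g (-(n:ℤ))| ≤ |a| * n + |b| + 1/D := by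
    intro n
    have hle : f (-(n:ℤ)) ≤ a * n + b := by
      have := hab (-(n:ℤ)) (by omega)
      simpa using this
    have hge : 0 ≤ f (-(n:ℤ)) := hnonneg _ (by omega)
    have hp1 : 0 < p (-(n:ℤ)) := by rw [hp]; exact div_pos (hzpow_pos _) hDpos
    have hp2 : p (-(n:ℤ)) ≤ 1/D := by
      rw [hp]
      gcongr
      exact hzpow_le n
    have han : a * n ≤ |a| * n := by
      have : (0:ℝ) ≤ (n:ℝ) := Nat.cast_nonneg n
      nlinarith [le_abs_self a]
    have hbn : b ≤ |b| := le_abs_self b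
    have h1 : (0:ℝ) ≤ |a| * n + |b| := by positivity
    have hDinv : (0:ℝ) < 1/D := by positivity
    rw [hg, abs_le]
    constructor
    · linarith
    · linarith
  have hBbound : ∀ n : ℕ, |B| ≤ (|A| + |b| + 1/D) * (ξ₁⁻¹)^n + |a| * ((n:ℝ) * (ξ₁⁻¹)^n) := by
    intro n
    have h2 : B * ξ₁^n = g (-(n:ℤ)) - A * ξ₂^n := by
      rw [key n]; ring
    have h3 : |B * ξ₁^n| ≤ |g (-(n:ℤ))| + |A * ξ₂^n| := by
      rw [h2]; exact abs_sub _ _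
    have hq : ξ₂^n ≤ 1 := pow_le_one₀ hξ₂pos.le hξ₂lt1.le
    have h4 : |A * ξ₂^n| ≤ |A| := by
      rw [abs_mul, abs_of_nonneg (pow_nonneg hξ₂pos.le n)]
      exact mul_le_of_le_one_right (abs_nonneg A) hq
    have h5 : |B * ξ₁^n| = |B| * ξ₁^n := by
      rw [abs_mul, abs_of_nonneg (pow_nonneg hξ₁pos.le n)]
    have h1 : |B| * ξ₁^n ≤ |A| + |a| * n + |b| + 1/D := by
      calc |B| * ξ₁^n = |B * ξ₁^n| := h5.symm
        _ ≤ |g (-(n:ℤ))| + |A * ξ₂^n| := h3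
        _ ≤ (|a| * n + |b| + 1/D) + |A| := add_le_add (hgbound n) h4
        _ = |A| + |a| * n + |b| + 1/D := by ring
    have hpow : (0:ℝ) < ξ₁^n := pow_pos hξ₁pos n
    calc |B| = (|B| * ξ₁^n) * (ξ₁⁻¹)^n := by
          rw [inv_pow]
          field_simp
      _ ≤ (|A| + |a| * n + |b| + 1/D) * (ξ₁⁻¹)^n := by
          apply mul_le_mul_of_nonneg_right h1
          positivity
      _ = (|A| + |b| + 1/D) * (ξ₁⁻¹)^n + |a| * ((n:ℝ) * (ξ₁⁻¹)^n) := by ring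
  have hrlt : ξ₁⁻¹ < 1 := inv_lt_one_of_one_lt₀ hξ₁gt
  have hrnonneg : (0:ℝ) ≤ ξ₁⁻¹ := inv_nonneg.mpr hξ₁pos.le
  have htend1 : Filter.Tendsto (fun n : ℕ => (ξ₁⁻¹)^n) Filter.atTop (nhds 0) :=
    tendsto_pow_atTop_nhds_zero_of_lt_one hrnonneg hrlt
  have htend2 : Filter.Tendsto (fun n : ℕ => (n:ℝ) * (ξ₁⁻¹)^n) Filter.atTop (nhds 0) := by
    exact tendsto_self_mul_const_pow_of_lt_one hrnonneg hrlt
  have htend : Filter.Tendsto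
      (fun n : ℕ => (|A| + |b| + 1/D) * (ξ₁⁻¹)^n + |a| * ((n:ℝ) * (ξ₁⁻¹)^n))
      Filter.atTop (nhds 0) := by
    have := (htend1.const_mul (|A| + |b| + 1/D)).add (htend2.const_mul |a|)
    simpa using this
  have hB0 : B = 0 := by
    have hle : |B| ≤ 0 := ge_of_tendsto' htend hBbound
    exact abs_eq_zero.mp (le_antisymm hle (abs_nonneg B))
  -- Kill A using the boundary condition
  have hp0 : p 0 = (1 - δ) * (p (-1) + 1/2) := by
    rw [hp, hp]
    have h1 : ξ₁ ^ (0:ℤ) = 1 := zpow_zero ξ₁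
    have h2 : ξ₁ ^ (-1:ℤ) = ξ₂ := by rw [hξ₂inv, zpow_neg_one]
    rw [h1, h2]
    have hεξ₂ : (1 - δ) * ξ₂ = 1 - s := by
      rw [hξ₂def]; field_simp
    field_simp [hDne]
    linear_combination (-1)*hsum + (-(1-δ))*hDdef
  have hg0 : g 0 = (1 - δ) * g (-1) := by
    rw [hg, hg, h0, hp0]
    ring
  have hA0 : A = 0 := by
    have e0 : g 0 = A := by
      have h := key 0
      rw [show (-(↑(0:ℕ):ℤ)) = 0 by norm_num] at h
      rw [h, hB0]; ring
    have e1 : g (-1) = A * ξ₂ := by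
      have h := (key2 0).2
      rw [show (-(↑(0:ℕ):ℤ) - 1) = (-1 : ℤ) by norm_num] at h
      rw [h, hB0]; ring
    rw [e0, e1] at hg0
    have hεξ₂ : (1 - δ) * ξ₂ = 1 - s := by
      rw [hξ₂def]; field_simp
    have hAs : A * s = 0 := by linear_combination hg0 + A * hεξ₂
    rcases mul_eq_zero.mp hAs with h | h
    · exact h
    · exact absurd h (ne_of_gt hs0)
  have hgzero : ∀ x : ℤ, x ≤ 0 → g x = 0 := by
    intro x hx
    obtain ⟨n, rfl⟩ : ∃ n : ℕ, x = -(n:ℤ) := ⟨x.natAbs, by omega⟩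
    rw [key n, hA0, hB0]
    ring
  have hfval : ∀ x : ℤ, x ≤ 0 → f x = ξ₁ ^ x / D := by
    intro x hx
    have h := hgzero x hx
    rw [hg, hp] at h
    linarith
  have hDD : ξ₁ - 1/ξ₁ = D := by
    rw [hDdef, hξ₂inv, one_div]
  refine ⟨fun x hx => by rw [hDD]; exact hfval x hx, ?_⟩
  have h := hfval 0 le_rfl
  rw [h]
  simp only [zpow_zero]
  rw [← hsdef]
  rw [div_eq_div_iff hDne (by positivity)]
  linarith [hDval]
end

section
/- Let 0 < δ < 1, ξ₁ = (1+√(1-(1-δ)²))/(1-δ), and for integers x with x ≤ 0 define p₁(x) = 1 - ξ₁ˣ/2 and p₂(x) = ξ₁ˣ/2. Then p₁(x), p₂(x) ∈ [0,1], p₁(x)+p₂(x)=1, p₁(0)=p₂(0)=1/2, and with f(x) = ξ₁ˣ/(ξ₁-1/ξ₁) one has for every x < 0: f(x) = (1-δ)(f(x-1)+1-p₁(x)) = (1-δ)(f(x+1)-p₂(x)). -/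
/-! The base ξ₁ is the root larger than 1 of `(1 - δ) ξ² - 2 ξ + (1 - δ) = 0`, i.e.
`(1 - δ) (ξ₁² + 1) = 2 ξ₁`. Dividing either recurrence for `f = ξ₁ˣ / (ξ₁ - 1/ξ₁)` by `ξ₁ˣ`
reduces it to exactly this identity, while `ξ₁ > 1` makes `ξ₁ˣ ∈ (0, 1]` for `x ≤ 0`. -/

section

variable {c ξ : ℝ}

lemma one_lt_one_add_sqrt_one_sub_sq_div (hc0 : 0 < c) (hc1 : c < 1) :
    1 < (1 + √(1 - c ^ 2)) / c := by
  rw [one_lt_div hc0]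
  linarith [Real.sqrt_nonneg (1 - c ^ 2)]

lemma mul_sq_add_one_eq_two_mul (hc0 : 0 < c) (hc1 : c ≤ 1)
    (hξ : ξ = (1 + √(1 - c ^ 2)) / c) : c * (ξ ^ 2 + 1) = 2 * ξ := by
  have hs : √(1 - c ^ 2) ^ 2 = 1 - c ^ 2 := Real.sq_sqrt (by nlinarith)
  rw [hξ]
  field_simp
  linear_combination hs

lemma zpow_div_sub_eq_mul_pred (hξ0 : ξ ≠ 0) (hξ1 : ξ ^ 2 - 1 ≠ 0) (hc : c * (ξ ^ 2 + 1) = 2 * ξ)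
    (x : ℤ) : ξ ^ x / (ξ - 1 / ξ) = c * (ξ ^ (x - 1) / (ξ - 1 / ξ) + ξ ^ x / 2) := by
  rw [zpow_sub_one₀ hξ0]
  field_simp
  linear_combination -hc

lemma zpow_div_sub_eq_mul_succ (hξ0 : ξ ≠ 0) (hξ1 : ξ ^ 2 - 1 ≠ 0) (hc : c * (ξ ^ 2 + 1) = 2 * ξ)
    (x : ℤ) : ξ ^ x / (ξ - 1 / ξ) = c * (ξ ^ (x + 1) / (ξ - 1 / ξ) - ξ ^ x / 2) := by
  rw [zpow_add_one₀ hξ0]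
  field_simp
  linear_combination -hc

lemma zpow_div_two_mem_Icc (hξ : 1 ≤ ξ) {x : ℤ} (hx : x ≤ 0) : ξ ^ x / 2 ∈ Set.Icc (0 : ℝ) 1 := by
  have hpos : 0 < ξ ^ x := zpow_pos (by linarith) x
  have hle : ξ ^ x ≤ 1 := zpow_le_one_of_nonpos₀ hξ hx
  constructor <;> linarith

end

theorem stmt_5 (δ : ℝ) (hδ0 : 0 < δ) (hδ1 : δ < 1)
    (ξ₁ : ℝ) (hξ₁ : ξ₁ = (1 + Real.sqrt (1 - (1 - δ) ^ 2)) / (1 - δ))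
    (p₁ p₂ : ℤ → ℝ) (hp₁ : ∀ x : ℤ, p₁ x = 1 - ξ₁ ^ x / 2)
    (hp₂ : ∀ x : ℤ, p₂ x = ξ₁ ^ x / 2)
    (f : ℤ → ℝ) (hf : ∀ x : ℤ, f x = ξ₁ ^ x / (ξ₁ - 1 / ξ₁)) :
    (∀ x : ℤ, x ≤ 0 → p₁ x ∈ Set.Icc (0 : ℝ) 1 ∧ p₂ x ∈ Set.Icc (0 : ℝ) 1 ∧
        p₁ x + p₂ x = 1) ∧
    p₁ 0 = 1 / 2 ∧ p₂ 0 = 1 / 2 ∧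
    (∀ x : ℤ, x < 0 →
      f x = (1 - δ) * (f (x - 1) + 1 - p₁ x) ∧
      f x = (1 - δ) * (f (x + 1) - p₂ x)) := by
  have hξ_gt : 1 < ξ₁ := hξ₁ ▸ one_lt_one_add_sqrt_one_sub_sq_div (by linarith) (by linarith)
  have hξ0 : ξ₁ ≠ 0 := (zero_lt_one.trans hξ_gt).ne'
  have hξ1 : ξ₁ ^ 2 - 1 ≠ 0 := by nlinarith
  have hc := mul_sq_add_one_eq_two_mul (by linarith) (by linarith) hξ₁
  refine ⟨fun x hx => ?_, by norm_num [hp₁], by norm_num [hp₂], fun x _ => ⟨?_, ?_⟩⟩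
  · have hmem := zpow_div_two_mem_Icc hξ_gt.le hx
    rw [hp₁, hp₂]
    exact ⟨Set.Icc.mem_iff_one_sub_mem.mp hmem, hmem, by ring⟩
  · rw [hf, hf, hp₁]
    linear_combination zpow_div_sub_eq_mul_pred hξ0 hξ1 hc x
  · rw [hf, hf, hp₂]
    linear_combination zpow_div_sub_eq_mul_succ hξ0 hξ1 hc x
end

section
/- Let 0 < δ < 1 and ξ₁ be the larger root of x² - (2/(1-δ))x + 1 = 0. For integers x₁, x₂ with 0 ≥ x₁ ≥ x₂, define f(x₁,x₂) = ξ₁^{x₁}/(ξ₁-ξ₂) + ξ₁^{2x₂-x₁}/(3(ξ₁-ξ₂)) where ξ₂ = 1/ξ₁. Then for all x₁, x₂ with 0 > x₁ > x₂: f(x₁,x₂) = (1-δ)·(f(x₁-1,x₂)+f(x₁+1,x₂))/2 and f(x₁,x₂) = (1-δ)·(f(x₁-1,x₂-1)+f(x₁+1,x₂+1))/2. -/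
theorem stmt_6 (δ ξ₁ ξ₂ : ℝ) (hδ0 : 0 < δ) (hδ1 : δ < 1)
    (hξ₁gt : 1 < ξ₁) (hroot : ξ₁ ^ 2 - (2 / (1 - δ)) * ξ₁ + 1 = 0)
    (hξ₂ : ξ₂ = 1 / ξ₁)
    (f : ℤ → ℤ → ℝ)
    (hf : ∀ x₁ x₂ : ℤ, f x₁ x₂ = ξ₁ ^ x₁ / (ξ₁ - ξ₂) + ξ₁ ^ (2 * x₂ - x₁) / (3 * (ξ₁ - ξ₂))) :
    ∀ x₁ x₂ : ℤ, x₁ < 0 → x₂ < x₁ →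
      f x₁ x₂ = (1 - δ) * (f (x₁ - 1) x₂ + f (x₁ + 1) x₂) / 2 ∧
      f x₁ x₂ = (1 - δ) * (f (x₁ - 1) (x₂ - 1) + f (x₁ + 1) (x₂ + 1)) / 2 := by
  have hξ0 : (0:ℝ) < ξ₁ := lt_trans one_pos hξ₁gt
  have hξne : ξ₁ ≠ 0 := ne_of_gt hξ0
  have h1δ : (1:ℝ) - δ ≠ 0 := by linarith
  have hsum : (1 - δ) * (ξ₁⁻¹ + ξ₁) = 2 := by
    have h := hroot
    field_simp at h ⊢
    nlinarith [h]
  have em : ∀ n : ℤ, ξ₁ ^ (n - 1) = ξ₁ ^ n * ξ₁⁻¹ := fun n => zpow_sub_one₀ hξne n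
  have ep : ∀ n : ℤ, ξ₁ ^ (n + 1) = ξ₁ ^ n * ξ₁ := fun n => zpow_add_one₀ hξne n
  intro x₁ x₂ _ _
  constructor
  · rw [hf, hf, hf]
    have h1 : 2 * x₂ - (x₁ - 1) = (2 * x₂ - x₁) + 1 := by ring
    have h2 : 2 * x₂ - (x₁ + 1) = (2 * x₂ - x₁) - 1 := by ring
    rw [h1, h2, em, ep, em, ep]
    set a := ξ₁ ^ x₁
    set b := ξ₁ ^ (2 * x₂ - x₁)
    linear_combination (-(a / (ξ₁ - ξ₂) + b / (3 * (ξ₁ - ξ₂))) / 2) * hsum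
  · rw [hf, hf, hf]
    have h1 : 2 * (x₂ - 1) - (x₁ - 1) = (2 * x₂ - x₁) - 1 := by ring
    have h2 : 2 * (x₂ + 1) - (x₁ + 1) = (2 * x₂ - x₁) + 1 := by ring
    rw [h1, h2, em, ep, em, ep]
    set a := ξ₁ ^ x₁
    set b := ξ₁ ^ (2 * x₂ - x₁)
    linear_combination (-(a / (ξ₁ - ξ₂) + b / (3 * (ξ₁ - ξ₂))) / 2) * hsum
end

section
/- Let 0 < δ < 1, ξ₁ > 1 the larger root of x²-(2/(1-δ))x+1=0, and for integers 0 ≥ x₁ ≥ x₂ define p₁ = 1 - ξ₁^{x₁}/2 - ξ₁^{2x₂-x₁}/6, p₂ = ξ₁^{x₁}/2 - ξ₁^{2x₂-x₁}/6, p₃ = ξ₁^{2x₂-x₁}/3. Then p₁+p₂+p₃=1, each pᵢ ∈ [0,1], p₁ ≥ p₂ ≥ p₃, and moreover p₁=p₂ when x₁=0, p₂=p₃ when x₁=x₂, and p₁=p₂=p₃=1/3 when x₁=x₂=0. -/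
theorem stmt_8 (δ ξ₁ : ℝ) (hδ0 : 0 < δ) (hδ1 : δ < 1)
    (hξ₁gt : 1 < ξ₁) (hroot : ξ₁ ^ 2 - (2 / (1 - δ)) * ξ₁ + 1 = 0)
    (x₁ x₂ : ℤ) (hx₁ : x₁ ≤ 0) (hx₂ : x₂ ≤ x₁)
    (p₁ p₂ p₃ : ℝ)
    (hp₁ : p₁ = 1 - ξ₁ ^ x₁ / 2 - ξ₁ ^ (2 * x₂ - x₁) / 6)
    (hp₂ : p₂ = ξ₁ ^ x₁ / 2 - ξ₁ ^ (2 * x₂ - x₁) / 6)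
    (hp₃ : p₃ = ξ₁ ^ (2 * x₂ - x₁) / 3) :
    p₁ + p₂ + p₃ = 1 ∧
    p₁ ∈ Set.Icc (0 : ℝ) 1 ∧ p₂ ∈ Set.Icc (0 : ℝ) 1 ∧ p₃ ∈ Set.Icc (0 : ℝ) 1 ∧
    p₂ ≤ p₁ ∧ p₃ ≤ p₂ ∧
    (x₁ = 0 → p₁ = p₂) ∧ (x₁ = x₂ → p₂ = p₃) ∧
    (x₁ = 0 → x₂ = 0 → p₁ = 1 / 3 ∧ p₂ = 1 / 3 ∧ p₃ = 1 / 3) := by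
  have hξpos : (0:ℝ) < ξ₁ := lt_trans one_pos hξ₁gt
  set a : ℝ := ξ₁ ^ x₁ with ha
  set b : ℝ := ξ₁ ^ (2 * x₂ - x₁) with hb
  have hapos : 0 < a := zpow_pos hξpos _
  have hbpos : 0 < b := zpow_pos hξpos _
  have ha1 : a ≤ 1 := zpow_le_one_of_nonpos₀ hξ₁gt.le hx₁
  have hexp : 2 * x₂ - x₁ ≤ x₁ := by omega
  have hba : b ≤ a := zpow_le_zpow_right₀ hξ₁gt.le hexp
  refine ⟨by rw [hp₁, hp₂, hp₃]; ring, ⟨?_, ?_⟩, ⟨?_, ?_⟩, ⟨?_, ?_⟩, ?_, ?_, ?_, ?_, ?_⟩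
  · rw [hp₁]; nlinarith
  · rw [hp₁]; nlinarith
  · rw [hp₂]; nlinarith
  · rw [hp₂]; nlinarith
  · rw [hp₃]; nlinarith
  · rw [hp₃]; nlinarith
  · rw [hp₁, hp₂]; nlinarith
  · rw [hp₂, hp₃]; nlinarith
  · intro h
    have : a = 1 := by rw [ha, h, zpow_zero]
    rw [hp₁, hp₂, this]; ring
  · intro h
    have : b = a := by rw [ha, hb]; congr 1; omega
    rw [hp₂, hp₃, this]; ring
  · intro h1 h2
    have h3 : a = 1 := by rw [ha, h1, zpow_zero]
    have h4 : b = 1 := by rw [hb, h1, h2]; norm_num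
    rw [hp₁, hp₂, hp₃, h3, h4]; norm_num
end

section
/- Let 0 < δ < 1, let ξ₁ > 1 > ξ₂ > 0 with ξ₁ξ₂=1 and ξ₁+ξ₂=2/(1-δ). For integers 0 > x₁ > x₂, with f(x₁,x₂) = ξ₁^{x₁}/(ξ₁-ξ₂) + ξ₁^{2x₂-x₁}/(3(ξ₁-ξ₂)), the inequality f(x₁,x₂) ≥ (1-δ)·(f(x₁, x₂-1) + ξ₁^{2x₂-x₁}/3) holds. -/
theorem stmt_9 (δ ξ₁ ξ₂ : ℝ) (hδ0 : 0 < δ) (hδ1 : δ < 1)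
    (hξ₁ : 1 < ξ₁) (hξ₂0 : 0 < ξ₂) (hξ₂1 : ξ₂ < 1)
    (hprod : ξ₁ * ξ₂ = 1) (hsum : ξ₁ + ξ₂ = 2 / (1 - δ))
    (f : ℤ → ℤ → ℝ)
    (hf : ∀ x₁ x₂ : ℤ, f x₁ x₂ = ξ₁ ^ x₁ / (ξ₁ - ξ₂) + ξ₁ ^ (2 * x₂ - x₁) / (3 * (ξ₁ - ξ₂)))
    (x₁ x₂ : ℤ) (hx₁ : x₁ < 0) (hx₂ : x₂ < x₁) :
    f x₁ x₂ ≥ (1 - δ) * (f x₁ (x₂ - 1) + ξ₁ ^ (2 * x₂ - x₁) / 3) := by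
  have hξ₁0 : (0:ℝ) < ξ₁ := by linarith
  have hξ₁ne : ξ₁ ≠ 0 := ne_of_gt hξ₁0
  have hd : (0:ℝ) < ξ₁ - ξ₂ := by linarith
  have hs : (0:ℝ) < ξ₁ + ξ₂ := by linarith
  have h1δ : 1 - δ = 2 / (ξ₁ + ξ₂) := by
    rw [hsum]; field_simp
  set a := ξ₁ ^ x₁ with ha
  set b := ξ₁ ^ (2 * x₂ - x₁) with hbdef
  have hb : 0 < b := zpow_pos hξ₁0 _
  have ha0 : 0 < a := zpow_pos hξ₁0 _
  have hab : b ≤ a := zpow_le_zpow_right₀ hξ₁.le (by linarith)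
  have hinv : ξ₁⁻¹ = ξ₂ := by
    field_simp; linarith [hprod]
  have hb2 : ξ₁ ^ (2 * (x₂ - 1) - x₁) = b * ξ₂ ^ 2 := by
    have h : ξ₁ ^ (2 * (x₂ - 1) - x₁) = ξ₁ ^ (2 * x₂ - x₁) * ξ₁ ^ (-2 : ℤ) := by
      rw [← zpow_add₀ hξ₁ne]; ring_nf
    rw [h, hbdef]
    congr 1
    rw [← hinv, show ((-2:ℤ)) = (-1) * 2 by ring, zpow_mul, zpow_neg_one,
      ← zpow_natCast ξ₁⁻¹ 2]
    norm_num
  have hge2 : (0:ℝ) ≤ ξ₁ + ξ₂ - 2 := by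
    nlinarith [sq_nonneg (1 - ξ₂)]
  have step : (0:ℝ) ≤ 2 * ξ₁ + 6 * ξ₂ - 2 * ξ₂ ^ 2 - 6 := by
    nlinarith [pow_nonneg (by linarith : (0:ℝ) ≤ 1 - ξ₂) 3]
  have key : (ξ₁ + ξ₂) * (3 * a + b) ≥ 2 * (3 * a + b * ξ₂ ^ 2 + b * (ξ₁ - ξ₂)) := by
    nlinarith [mul_le_mul_of_nonneg_right hab hge2, mul_nonneg hb.le step]
  rw [hf, hf, hb2, h1δ, ge_iff_le, ← sub_nonneg]
  calc (0:ℝ) ≤ ((ξ₁ + ξ₂) * (3 * a + b) - 2 * (3 * a + b * ξ₂ ^ 2 + b * (ξ₁ - ξ₂)))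
        / (3 * (ξ₁ - ξ₂) * (ξ₁ + ξ₂)) :=
      div_nonneg (by linarith [key]) (by positivity)
    _ = a / (ξ₁ - ξ₂) + b / (3 * (ξ₁ - ξ₂))
        - 2 / (ξ₁ + ξ₂) * (a / (ξ₁ - ξ₂) + b * ξ₂ ^ 2 / (3 * (ξ₁ - ξ₂)) + b / 3) := by
      field_simp
end

section
/- Let 0 < δ < 1, let ξ₁ > 1 > ξ₂ > 0 with ξ₁ξ₂=1 and ξ₁+ξ₂=2/(1-δ). For integers 0 > x₁ > x₂, with f(x₁,x₂) = ξ₁^{x₁}/(ξ₁-ξ₂) + ξ₁^{2x₂-x₁}/(3(ξ₁-ξ₂)), the inequality f(x₁,x₂) ≥ (1-δ)·(f(x₁, x₂+1) - ξ₁^{2x₂-x₁}/3) holds. -/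
theorem stmt_10 (δ ξ₁ ξ₂ : ℝ) (hδ0 : 0 < δ) (hδ1 : δ < 1)
    (hξ₁ : 1 < ξ₁) (hξ₂0 : 0 < ξ₂) (hξ₂1 : ξ₂ < 1)
    (hprod : ξ₁ * ξ₂ = 1) (hsum : ξ₁ + ξ₂ = 2 / (1 - δ))
    (f : ℤ → ℤ → ℝ)
    (hf : ∀ x₁ x₂ : ℤ, f x₁ x₂ = ξ₁ ^ x₁ / (ξ₁ - ξ₂) + ξ₁ ^ (2 * x₂ - x₁) / (3 * (ξ₁ - ξ₂)))
    (x₁ x₂ : ℤ) (hx₁ : x₁ < 0) (hx₂ : x₂ < x₁) :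
    f x₁ x₂ ≥ (1 - δ) * (f x₁ (x₂ + 1) - ξ₁ ^ (2 * x₂ - x₁) / 3) := by
  have hξ₁0 : (0:ℝ) < ξ₁ := by linarith
  have hξ₁0' : ξ₁ ≠ 0 := ne_of_gt hξ₁0
  have hd : 0 < ξ₁ - ξ₂ := by linarith
  have h1δ : 0 < 1 - δ := by linarith
  have hs : 0 < ξ₁ + ξ₂ := by linarith
  have h1δeq : 1 - δ = 2 / (ξ₁ + ξ₂) := by
    rw [hsum] at *
    field_simp
  have hb : 0 < ξ₁ ^ (2 * x₂ - x₁) := zpow_pos hξ₁0 _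
  have ht : ξ₁ ≤ ξ₁ ^ (x₁ - x₂) := by
    calc ξ₁ = ξ₁ ^ (1:ℤ) := (zpow_one ξ₁).symm
    _ ≤ ξ₁ ^ (x₁ - x₂) := zpow_le_zpow_right₀ hξ₁.le (by omega)
  have ha : ξ₁ ^ x₁ = ξ₁ ^ (2 * x₂ - x₁) * (ξ₁ ^ (x₁ - x₂)) ^ 2 := by
    rw [← zpow_natCast (ξ₁ ^ (x₁ - x₂)), ← zpow_mul, ← zpow_add₀ hξ₁0']
    congr 1; ring
  have key : 3 * ξ₁ ^ x₁ ≥ (2 * ξ₁ + 1) * ξ₁ ^ (2 * x₂ - x₁) := by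
    rw [ha]
    nlinarith [hb, ht, sq_nonneg (ξ₁ ^ (x₁ - x₂) - ξ₁), mul_pos hb hξ₁0]
  have he : ξ₁ ^ (2 * (x₂ + 1) - x₁) = ξ₁ ^ (2 * x₂ - x₁) * ξ₁ ^ 2 := by
    rw [← zpow_natCast ξ₁, ← zpow_add₀ hξ₁0']
    congr 1; ring
  rw [hf, hf, he, h1δeq, ge_iff_le, ← sub_nonneg]
  set b := ξ₁ ^ (2 * x₂ - x₁) with hbdef
  set a := ξ₁ ^ x₁ with hadef
  have hgap : 0 ≤ ξ₁ + ξ₂ - 2 := by nlinarith [sq_nonneg (ξ₁ - 1), hprod]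
  have hmain : 0 ≤ (3 * a - (2 * ξ₁ + 1) * b) * (ξ₁ + ξ₂ - 2) :=
    mul_nonneg (by linarith [key]) hgap
  have hexp : (a / (ξ₁ - ξ₂) + b / (3 * (ξ₁ - ξ₂)))
      - 2 / (ξ₁ + ξ₂) * (a / (ξ₁ - ξ₂) + b * ξ₁ ^ 2 / (3 * (ξ₁ - ξ₂)) - b / 3)
      = (3 * a * (ξ₁ + ξ₂ - 2) - b * (2 * ξ₁ ^ 2 - 3 * ξ₁ + ξ₂))
        / (3 * (ξ₁ - ξ₂) * (ξ₁ + ξ₂)) := by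
    field_simp
    ring
  rw [hexp]
  apply div_nonneg _ (by positivity)
  nlinarith [hmain, hprod, hb]
end

section
/- Define g : ℤ≤0 × ℕ → ℝ by g(x,ℓ) = (E[|SRW(x,ℓ)|] - |x|)/2, where SRW(x,ℓ) is the position after ℓ steps of a simple symmetric ±1 random walk started at x. Then g satisfies: g(x,0) = 0 for all x ≤ 0; g(x,ℓ) = (g(x+1,ℓ-1) + g(x-1,ℓ-1))/2 for all ℓ > 0 and x < 0; and g(0,ℓ) = g(-1,ℓ-1) + 1/2 for all ℓ > 0. -/
/-!
Conditioning on the first step gives `E|SRW(x, ℓ+1)| = (E|SRW(x+1, ℓ)| + E|SRW(x-1, ℓ)|) / 2`.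
Subtracting `|x|` and using `(|x+1| + |x-1|) / 2 = |x| + [x = 0]` for integers `x` turns this
into `g(x, ℓ+1) = (g(x+1, ℓ) + g(x-1, ℓ)) / 2 + [x = 0] / 2`. At `x = 0` the reflection
symmetry `g(1, ℓ) = g(-1, ℓ)` of the walk collapses the average to `g(-1, ℓ)`.
-/

/-- Expected absolute value of the position after `ℓ` steps of a simple symmetric
±1 random walk started at `x`, computed as a uniform average over the `2^ℓ`
equally likely step sequences. -/
noncomputable def expAbsSRW (x : ℤ) (ℓ : ℕ) : ℝ :=
  (∑ s : Fin ℓ → Bool, |(x : ℝ) + ∑ i, (if s i then (1 : ℝ) else -1)|) / 2 ^ ℓ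

/-- `g x ℓ = (E[|SRW(x,ℓ)|] - |x|)/2`. -/
noncomputable def gSRW (x : ℤ) (ℓ : ℕ) : ℝ := (expAbsSRW x ℓ - |(x : ℝ)|) / 2

lemma expAbsSRW_succ (x : ℤ) (ℓ : ℕ) :
    expAbsSRW x (ℓ + 1) = (expAbsSRW (x + 1) ℓ + expAbsSRW (x - 1) ℓ) / 2 := by
  have first_step (b : Bool) (s : Fin ℓ → Bool) :
      ∑ i, (if (Fin.cons b s : Fin (ℓ + 1) → Bool) i then (1 : ℝ) else -1) =
        (if b then 1 else -1) + ∑ i, if s i then 1 else -1 := by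
    simp only [Fin.sum_univ_succ, Fin.cons_zero, Fin.cons_succ]
  unfold expAbsSRW
  rw [← (Fin.consEquiv fun _ => Bool).sum_comp, Fintype.sum_prod_type]
  simp only [Fintype.sum_bool, Fin.consEquiv_apply, first_step]
  push_cast
  ring_nf

lemma expAbsSRW_neg (x : ℤ) (ℓ : ℕ) : expAbsSRW (-x) ℓ = expAbsSRW x ℓ := by
  have step_not (b : Bool) : (if !b then (1 : ℝ) else -1) = -(if b then 1 else -1) := by
    cases b <;> norm_num
  unfold expAbsSRW
  congr 1
  refine Fintype.sum_equiv (.piCongrRight fun _ => Equiv.boolNot) _ _ fun s => ?_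
  rw [← abs_neg]
  simp only [Equiv.piCongrRight_apply, Pi.map_apply, Equiv.boolNot_apply, step_not,
    Finset.sum_neg_distrib]
  push_cast
  ring_nf

lemma Int.abs_add_one_add_abs_sub_one (y : ℤ) :
    |y + 1| + |y - 1| = 2 * |y| + if y = 0 then 2 else 0 := by
  simp only [abs_eq_max_neg]
  split_ifs <;> omega

lemma gSRW_succ (x : ℤ) (ℓ : ℕ) :
    gSRW x (ℓ + 1) = (gSRW (x + 1) ℓ + gSRW (x - 1) ℓ) / 2 + if x = 0 then 1 / 2 else 0 := by
  have h : |(x : ℝ) + 1| + |(x : ℝ) - 1| = 2 * |(x : ℝ)| + if x = 0 then 2 else 0 := by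
    exact_mod_cast Int.abs_add_one_add_abs_sub_one x
  unfold gSRW
  rw [expAbsSRW_succ]
  push_cast
  split_ifs at h ⊢ <;> linarith

lemma gSRW_neg (x : ℤ) (ℓ : ℕ) : gSRW (-x) ℓ = gSRW x ℓ := by
  simp only [gSRW, expAbsSRW_neg, Int.cast_neg, abs_neg]

theorem stmt_12 :
    (∀ x : ℤ, x ≤ 0 → gSRW x 0 = 0) ∧
    (∀ (x : ℤ) (ℓ : ℕ), 0 < ℓ → x < 0 →
      gSRW x ℓ = (gSRW (x + 1) (ℓ - 1) + gSRW (x - 1) (ℓ - 1)) / 2) ∧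
    (∀ ℓ : ℕ, 0 < ℓ → gSRW 0 ℓ = gSRW (-1) (ℓ - 1) + 1 / 2) := by
  refine ⟨fun x _ => ?_, fun x ℓ hℓ hx => ?_, fun ℓ hℓ => ?_⟩
  · simp [gSRW, expAbsSRW]
  · obtain ⟨ℓ, rfl⟩ := Nat.exists_eq_add_one_of_ne_zero hℓ.ne'
    rw [gSRW_succ, if_neg hx.ne, add_zero, Nat.add_sub_cancel]
  · obtain ⟨ℓ, rfl⟩ := Nat.exists_eq_add_one_of_ne_zero hℓ.ne'
    rw [gSRW_succ, if_pos rfl, Nat.add_sub_cancel, zero_sub, zero_add, ← gSRW_neg 1,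
      add_self_div_two]
end

section
/- There is no finite (positive) measure μ on ℝ such that for all integers d ≥ 0, ∫ 1/(e^{ηd}+1) dμ(η) = (1/2)ξ^d, where 0 < ξ < 1 is fixed. -/
/-!
Write `ξ = e^{-t}`. As `d → ∞`, `e^{td} / (e^{ηd} + 1)` tends to `∞`, `1` or `0` according as
`η < t`, `η = t` or `η > t`. Multiplying the identities by `e^{td}` therefore forces `μ` to vanish
on `(-∞, t)` and to have an atom of mass exactly `1/2` at `t`. Removing this atom leaves a measure
`ν` on `(t, ∞)` with `∫ 1/(e^{ηd}+1) dν = ξ^{2d} / (2 (1 + ξ^d))`, and the same argument at `2t`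
gives `ν` an atom of mass `1/2` at `2t`. At `d = 1` this atom alone contributes
`ξ² / (2 (1 + ξ²))`, which exceeds `ξ² / (2 (1 + ξ))`.
-/

open MeasureTheory Filter Set Topology Real

noncomputable def followLag (d : ℕ) (η : ℝ) : ℝ := 1 / (exp (η * d) + 1)

lemma followLag_pos (d : ℕ) (η : ℝ) : 0 < followLag d η := by
  unfold followLag; positivity

lemma followLag_le_one (d : ℕ) (η : ℝ) : followLag d η ≤ 1 := by
  rw [followLag, div_le_one (by positivity)]
  linarith [exp_pos (η * d)]

lemma followLag_antitone (d : ℕ) : Antitone (followLag d) := fun a b hab => by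
  unfold followLag
  gcongr

lemma continuous_followLag (d : ℕ) : Continuous (followLag d) := by
  unfold followLag
  exact continuous_const.div (by fun_prop) fun η => by positivity

lemma integrable_followLag (μ : Measure ℝ) [IsFiniteMeasure μ] (d : ℕ) :
    Integrable (followLag d) μ :=
  Integrable.mono' (integrable_const 1) (continuous_followLag d).aestronglyMeasurable
    (Eventually.of_forall fun η => by
      rw [Real.norm_of_nonneg (followLag_pos d η).le]
      exact followLag_le_one d η)

lemma exp_neg_log_mul_natCast {ρ : ℝ} (hρ : 0 < ρ) (d : ℕ) : exp (-log ρ * d) = (ρ ^ d)⁻¹ := by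
  rw [neg_mul, exp_neg, ← rpow_def_of_pos hρ, rpow_natCast]

lemma followLag_neg_log {ρ : ℝ} (hρ : 0 < ρ) (d : ℕ) :
    followLag d (-log ρ) = ρ ^ d / (1 + ρ ^ d) := by
  rw [followLag, exp_neg_log_mul_natCast hρ]
  field_simp

lemma exp_mul_followLag (t η : ℝ) (d : ℕ) :
    exp (t * d) * followLag d η = (exp ((η - t) * d) + exp (-t * d))⁻¹ := by
  have h : exp ((η - t) * d) + exp (-t * d) = exp (-t * d) * (exp (η * d) + 1) := by
    rw [mul_add, ← exp_add, mul_one]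
    ring_nf
  rw [h, mul_inv, neg_mul, exp_neg, inv_inv, followLag, one_div]

lemma tendsto_exp_mul_natCast_of_neg {a : ℝ} (ha : a < 0) :
    Tendsto (fun d : ℕ => exp (a * d)) atTop (𝓝 0) :=
  tendsto_exp_atBot.comp (tendsto_natCast_atTop_atTop.const_mul_atTop_of_neg ha)

section Asymptotics

variable {t η : ℝ}

lemma tendsto_exp_mul_followLag_atTop (ht : 0 < t) (hη : η < t) :
    Tendsto (fun d : ℕ => exp (t * d) * followLag d η) atTop atTop := by
  simp_rw [exp_mul_followLag]
  refine Tendsto.inv_tendsto_nhdsGT_zero (tendsto_nhdsWithin_iff.mpr ⟨?_, ?_⟩)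
  · simpa using (tendsto_exp_mul_natCast_of_neg (sub_neg.mpr hη)).add
      (tendsto_exp_mul_natCast_of_neg (neg_neg_of_pos ht))
  · exact Eventually.of_forall fun d => mem_Ioi.mpr (by positivity)

lemma tendsto_exp_mul_followLag_self (ht : 0 < t) :
    Tendsto (fun d : ℕ => exp (t * d) * followLag d t) atTop (𝓝 1) := by
  simp_rw [exp_mul_followLag, sub_self, zero_mul, exp_zero]
  simpa using ((tendsto_exp_mul_natCast_of_neg (neg_neg_of_pos ht)).const_add 1).inv₀
    (by norm_num)

lemma tendsto_exp_mul_followLag_zero (hη : t < η) :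
    Tendsto (fun d : ℕ => exp (t * d) * followLag d η) atTop (𝓝 0) := by
  simp_rw [exp_mul_followLag]
  exact tendsto_inv_atTop_zero.comp (Tendsto.atTop_add_nonneg (tendsto_exp_atTop.comp
    (tendsto_natCast_atTop_atTop.const_mul_atTop (sub_pos.mpr hη))) fun d => (exp_pos _).le)

lemma exp_mul_followLag_le_one (hη : t ≤ η) (d : ℕ) : exp (t * d) * followLag d η ≤ 1 := by
  rw [exp_mul_followLag]
  refine inv_le_one_of_one_le₀ ?_
  have : 1 ≤ exp ((η - t) * d) := one_le_exp (by nlinarith [(d.cast_nonneg : (0 : ℝ) ≤ d)])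
  linarith [exp_pos (-t * d)]

end Asymptotics

lemma measureReal_singleton_mul_le_integral {α : Type*} [MeasurableSpace α]
    [MeasurableSingletonClass α] {μ : Measure α} {f : α → ℝ} (hf : Integrable f μ) (hf0 : 0 ≤ f)
    (a : α) : μ.real {a} * f a ≤ ∫ x, f x ∂μ := by
  rw [← smul_eq_mul, ← integral_singleton]
  exact setIntegral_le_integral hf (Eventually.of_forall hf0)

lemma integral_eq_measureReal_singleton_mul_add {μ : Measure ℝ} {t : ℝ} {f : ℝ → ℝ}
    (hμ : μ (Iio t) = 0) (hf : Integrable f μ) :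
    ∫ x, f x ∂μ = μ.real {t} * f t + ∫ x in Ioi t, f x ∂μ := by
  rw [← integral_add_compl measurableSet_Iio hf, Measure.restrict_eq_zero.mpr hμ,
    integral_zero_measure, zero_add, compl_Iio, ← Icc_union_Ioi_eq_Ici le_rfl, Icc_self,
    setIntegral_union (t := Ioi t) (disjoint_singleton_left.mpr (lt_irrefl t)) measurableSet_Ioi
      hf.integrableOn hf.integrableOn, integral_singleton, smul_eq_mul]

section FiniteMeasure

variable {μ : Measure ℝ} [IsFiniteMeasure μ] {ρ b : ℝ}

lemma measure_Iio_neg_log_eq_zero (hρ0 : 0 < ρ) (hρ1 : ρ < 1)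
    (hb : Tendsto (fun d : ℕ => (∫ η, followLag d η ∂μ) / ρ ^ d) atTop (𝓝 b)) :
    μ (Iio (-log ρ)) = 0 := by
  have ht : 0 < -log ρ := neg_pos.mpr (log_neg hρ0 hρ1)
  have hIic : ∀ s < -log ρ, μ (Iic s) = 0 := by
    intro s hs
    have hbound : ∀ d : ℕ, μ.real (Iic s) * (exp (-log ρ * d) * followLag d s)
        ≤ (∫ η, followLag d η ∂μ) / ρ ^ d := fun d =>
      calc μ.real (Iic s) * (exp (-log ρ * d) * followLag d s)
          = exp (-log ρ * d) * (followLag d s * μ.real (Iic s)) := by ring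
        _ ≤ exp (-log ρ * d) * ∫ η in Iic s, followLag d η ∂μ := by
          gcongr
          exact setIntegral_ge_of_const_le_real measurableSet_Iic (measure_ne_top μ _)
            (fun η hη => followLag_antitone d hη) (integrable_followLag μ d).integrableOn
        _ ≤ exp (-log ρ * d) * ∫ η, followLag d η ∂μ :=
          mul_le_mul_of_nonneg_left (setIntegral_le_integral (integrable_followLag μ d)
            (Eventually.of_forall fun η => (followLag_pos d η).le)) (exp_pos _).le
        _ = (∫ η, followLag d η ∂μ) / ρ ^ d := by
          rw [exp_neg_log_mul_natCast hρ0, inv_mul_eq_div]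
    by_contra hne
    have hpos : 0 < μ.real (Iic s) :=
      measureReal_nonneg.lt_of_ne (Ne.symm (mt (measureReal_eq_zero_iff (measure_ne_top μ _)).mp hne))
    have hinf := (tendsto_exp_mul_followLag_atTop ht hs).const_mul_atTop hpos
    obtain ⟨d, hd_gt, hd_lt⟩ := ((hinf.eventually_gt_atTop (b + 1)).and
      (hb.eventually (gt_mem_nhds (lt_add_one b)))).exists
    exact (hbound d).not_gt (hd_lt.trans hd_gt)
  have hlim : Tendsto (fun n : ℕ => -log ρ - 1 / (n + 1)) atTop (𝓝 (-log ρ)) := by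
    simpa using tendsto_one_div_add_atTop_nhds_zero_nat.const_sub (-log ρ)
  rw [← iUnion_Iic_eq_Iio_of_lt_of_tendsto (fun n => sub_lt_self _ Nat.one_div_pos_of_nat) hlim]
  exact measure_iUnion_null fun n => hIic _ (sub_lt_self _ Nat.one_div_pos_of_nat)

lemma measureReal_singleton_neg_log_eq (hρ0 : 0 < ρ) (hρ1 : ρ < 1)
    (hb : Tendsto (fun d : ℕ => (∫ η, followLag d η ∂μ) / ρ ^ d) atTop (𝓝 b)) :
    μ.real {-log ρ} = b := by
  have ht : 0 < -log ρ := neg_pos.mpr (log_neg hρ0 hρ1)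
  have hsplit : ∀ d : ℕ, (∫ η, followLag d η ∂μ) / ρ ^ d
      = μ.real {-log ρ} * (exp (-log ρ * d) * followLag d (-log ρ))
        + ∫ η in Ioi (-log ρ), exp (-log ρ * d) * followLag d η ∂μ := fun d => by
    rw [integral_const_mul, exp_neg_log_mul_natCast hρ0, integral_eq_measureReal_singleton_mul_add
      (measure_Iio_neg_log_eq_zero hρ0 hρ1 hb) (integrable_followLag μ d)]
    ring
  have hatom : Tendsto (fun d : ℕ => μ.real {-log ρ} * (exp (-log ρ * d) * followLag d (-log ρ)))
      atTop (𝓝 (μ.real {-log ρ})) := by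
    simpa using (tendsto_exp_mul_followLag_self ht).const_mul (μ.real {-log ρ})
  have htail : Tendsto (fun d : ℕ => ∫ η in Ioi (-log ρ), exp (-log ρ * d) * followLag d η ∂μ)
      atTop (𝓝 0) := by
    simpa using tendsto_integral_of_dominated_convergence (μ := μ.restrict (Ioi (-log ρ)))
      (fun _ => (1 : ℝ))
      (fun d => (continuous_const.mul (continuous_followLag d)).aestronglyMeasurable)
      (integrable_const 1)
      (fun d => (ae_restrict_iff' measurableSet_Ioi).mpr (Eventually.of_forall fun η hη => by
        simp only [Pi.mul_apply, Real.norm_of_nonneg (mul_pos (exp_pos _) (followLag_pos d η)).le]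
        exact exp_mul_followLag_le_one (le_of_lt hη) d))
      ((ae_restrict_iff' measurableSet_Ioi).mpr
        (Eventually.of_forall fun η hη => tendsto_exp_mul_followLag_zero hη))
  refine tendsto_nhds_unique ?_ hb
  simpa [hsplit] using hatom.add htail

end FiniteMeasure

theorem stmt_15 (ξ : ℝ) (hξ0 : 0 < ξ) (hξ1 : ξ < 1) :
    ¬ ∃ μ : Measure ℝ, IsFiniteMeasure μ ∧
      ∀ d : ℕ, ∫ η, 1 / (Real.exp (η * d) + 1) ∂μ = ξ ^ d / 2 := by
  rintro ⟨μ, hμ, h⟩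
  have hint : ∀ d : ℕ, ∫ η, followLag d η ∂μ = ξ ^ d / 2 := h
  have hlim : Tendsto (fun d : ℕ => (∫ η, followLag d η ∂μ) / ξ ^ d) atTop (𝓝 (1 / 2)) :=
    tendsto_const_nhds.congr fun d => by
      rw [hint]
      field_simp
  have hatom := measureReal_singleton_neg_log_eq hξ0 hξ1 hlim
  set ν := μ.restrict (Ioi (-log ξ))
  have hν : ∀ d : ℕ, ∫ η, followLag d η ∂ν = (ξ ^ 2) ^ d / (2 * (1 + ξ ^ d)) := fun d => by
    have := integral_eq_measureReal_singleton_mul_add (measure_Iio_neg_log_eq_zero hξ0 hξ1 hlim)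
      (integrable_followLag μ d)
    rw [hint, hatom, followLag_neg_log hξ0] at this
    rw [eq_sub_of_add_eq' this.symm]
    field_simp
    ring
  have hlim₂ : Tendsto (fun d : ℕ => (∫ η, followLag d η ∂ν) / (ξ ^ 2) ^ d) atTop (𝓝 (1 / 2)) := by
    have hpow := tendsto_pow_atTop_nhds_zero_of_lt_one hξ0.le hξ1
    have : Tendsto (fun d : ℕ => (2 * (1 + ξ ^ d))⁻¹) atTop (𝓝 (1 / 2)) := by
      simpa using ((hpow.const_add 1).const_mul 2).inv₀ (by norm_num)
    refine this.congr fun d => ?_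
    rw [hν]
    field_simp
  have hatom₂ := measureReal_singleton_neg_log_eq (by positivity) (by nlinarith) hlim₂
  have hlow := measureReal_singleton_mul_le_integral (integrable_followLag ν 1)
    (fun η => (followLag_pos 1 η).le) (-log (ξ ^ 2))
  rw [hatom₂, hν, followLag_neg_log (by positivity)] at hlow
  field_simp at hlow
  nlinarith
end

section
/- Let μ be a finite measure on ℝ and 0 < ξ < 1 with ∫ 1/((ξe^η)^d + ξ^d) dμ(η) = 1/2 for all integers d ≥ 0. Let η₀ = ln(1/ξ). Then μ({η : η < η₀}) = 0 and μ({η₀}) = 1/2. -/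
/-!
With `r η = ξ e^η`, the hypothesis reads `∫ 1 / (r^d + ξ^d) dμ = 1/2` for all `d`. On `{r ≤ t}`
with `t < 1` the integrand is at least `1 / (t^d + ξ^d) → ∞`, so by Markov's inequality this set
is null; hence `r ≥ 1` almost everywhere. There the integrand is bounded by `1` and tends to the
indicator of `{r = 1} = {η₀}`, so dominated convergence gives `μ {η₀} = 1/2`.
-/

open MeasureTheory Filter Topology

lemma tendsto_one_div_pow_add_pow {s a : ℝ} (hs : 1 ≤ s) (ha0 : 0 ≤ a) (ha1 : a < 1) :
    Tendsto (fun d : ℕ => 1 / (s ^ d + a ^ d)) atTop (𝓝 (if s = 1 then 1 else 0)) := by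
  have ha : Tendsto (fun d : ℕ => a ^ d) atTop (𝓝 0) :=
    tendsto_pow_atTop_nhds_zero_of_lt_one ha0 ha1
  split_ifs with h
  · subst h
    simpa using (tendsto_const_nhds.add ha).inv₀ (by norm_num : (1 : ℝ) + 0 ≠ 0)
  · have hpow := tendsto_pow_atTop_atTop_of_one_lt (lt_of_le_of_ne hs (Ne.symm h))
    simpa only [one_div, Pi.inv_def] using (hpow.atTop_add ha).inv_tendsto_atTop

section PowAddPowKernel

variable {α : Type*} [MeasurableSpace α] {μ : Measure α} [IsFiniteMeasure μ] {r : α → ℝ}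
  {a C : ℝ}

lemma integrable_one_div_pow_add_pow (hr : Measurable r) (hr0 : ∀ x, 0 ≤ r x) (ha : 0 < a)
    (d : ℕ) : Integrable (fun x => 1 / (r x ^ d + a ^ d)) μ := by
  have hmeas : Measurable fun x => 1 / (r x ^ d + a ^ d) := by fun_prop
  refine .of_bound hmeas.aestronglyMeasurable (a ^ d)⁻¹ (.of_forall fun x => ?_)
  have := pow_nonneg (hr0 x) d
  rw [Real.norm_of_nonneg (by positivity), one_div]
  exact inv_anti₀ (by positivity) (by linarith)

lemma measureReal_setOf_le_le (hr : Measurable r) (hr0 : ∀ x, 0 ≤ r x) (ha : 0 < a) {t : ℝ}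
    (ht : 0 ≤ t) {d : ℕ} (hint : ∫ x, 1 / (r x ^ d + a ^ d) ∂μ ≤ C) :
    μ.real {x | r x ≤ t} ≤ C * (t ^ d + a ^ d) := by
  have htd : 0 < t ^ d + a ^ d := by positivity
  have hsub : {x | r x ≤ t} ⊆ {x | 1 / (t ^ d + a ^ d) ≤ 1 / (r x ^ d + a ^ d)} := by
    intro x hx
    have := pow_nonneg (hr0 x) d
    have := pow_le_pow_left₀ (hr0 x) (show r x ≤ t from hx) d
    show 1 / (t ^ d + a ^ d) ≤ 1 / (r x ^ d + a ^ d)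
    exact one_div_le_one_div_of_le (by positivity) (by linarith)
  have markov := mul_meas_ge_le_integral_of_nonneg (f := fun x => 1 / (r x ^ d + a ^ d))
    (.of_forall fun x => by have := pow_nonneg (hr0 x) d; positivity)
    (integrable_one_div_pow_add_pow (μ := μ) hr hr0 ha d) (1 / (t ^ d + a ^ d))
  rw [← div_le_iff₀ htd]
  calc μ.real {x | r x ≤ t} / (t ^ d + a ^ d)
      ≤ 1 / (t ^ d + a ^ d) * μ.real {x | 1 / (t ^ d + a ^ d) ≤ 1 / (r x ^ d + a ^ d)} := by
        rw [one_div_mul_eq_div]; gcongr; exact measure_ne_top μ _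
    _ ≤ C := markov.trans hint

variable (hr : Measurable r) (hr0 : ∀ x, 0 ≤ r x) (ha0 : 0 < a) (ha1 : a < 1)
include hr hr0 ha0 ha1

lemma measure_setOf_le_eq_zero (hint : ∀ d : ℕ, ∫ x, 1 / (r x ^ d + a ^ d) ∂μ ≤ C)
    {t : ℝ} (ht0 : 0 ≤ t) (ht1 : t < 1) : μ {x | r x ≤ t} = 0 := by
  have hlim : Tendsto (fun d : ℕ => C * (t ^ d + a ^ d)) atTop (𝓝 0) := by
    simpa using ((tendsto_pow_atTop_nhds_zero_of_lt_one ht0 ht1).add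
      (tendsto_pow_atTop_nhds_zero_of_lt_one ha0.le ha1)).const_mul C
  rw [← measureReal_eq_zero_iff]
  exact le_antisymm (ge_of_tendsto' hlim fun d =>
    measureReal_setOf_le_le hr hr0 ha0 ht0 (hint d)) measureReal_nonneg

lemma measure_setOf_lt_one_eq_zero (hint : ∀ d : ℕ, ∫ x, 1 / (r x ^ d + a ^ d) ∂μ ≤ C) :
    μ {x | r x < 1} = 0 := by
  have hcover : {x | r x < 1} = ⋃ n : ℕ, {x | r x ≤ 1 - 1 / (n + 1)} := by
    ext x
    simp only [Set.mem_ofPred_eq, Set.mem_iUnion]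
    constructor
    · intro hx
      obtain ⟨n, hn⟩ := exists_nat_one_div_lt (sub_pos.mpr hx)
      exact ⟨n, by linarith⟩
    · rintro ⟨n, hn⟩
      linarith [Nat.one_div_pos_of_nat (α := ℝ) (n := n)]
  rw [hcover]
  refine measure_iUnion_null fun n => measure_setOf_le_eq_zero hr hr0 ha0 ha1 hint ?_ ?_
  · rw [sub_nonneg, div_le_one (by positivity)]
    linarith [n.cast_nonneg (α := ℝ)]
  · linarith [Nat.one_div_pos_of_nat (α := ℝ) (n := n)]

lemma measureReal_setOf_eq_one (hint : ∀ d : ℕ, ∫ x, 1 / (r x ^ d + a ^ d) ∂μ = C) :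
    μ.real {x | r x = 1} = C := by
  have hge : ∀ᵐ x ∂μ, 1 ≤ r x := by
    simpa [ae_iff, not_le] using
      measure_setOf_lt_one_eq_zero hr hr0 ha0 ha1 fun d => (hint d).le
  have hlim := tendsto_integral_of_dominated_convergence (μ := μ) (fun _ => 1)
    (fun d => (integrable_one_div_pow_add_pow hr hr0 ha0 d).aestronglyMeasurable)
    (integrable_const 1)
    (fun d => hge.mono fun x hx => by
      have := one_le_pow₀ (n := d) hx
      rw [Real.norm_of_nonneg (by positivity), div_le_one (by positivity)]
      linarith [pow_pos ha0 d])
    (hge.mono fun x hx => tendsto_one_div_pow_add_pow hx ha0.le ha1)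
  have hind : (fun x => if r x = 1 then (1 : ℝ) else 0) = {x | r x = 1}.indicator 1 := by
    ext x; simp [Set.indicator_apply]
  rw [hind, integral_indicator_one (measurableSet_eq_fun hr measurable_const)] at hlim
  simp only [hint] at hlim
  exact (tendsto_nhds_unique tendsto_const_nhds hlim).symm

end PowAddPowKernel

theorem stmt_16 (μ : Measure ℝ) [IsFiniteMeasure μ] (ξ : ℝ) (hξ0 : 0 < ξ) (hξ1 : ξ < 1)
    (hint : ∀ d : ℕ, ∫ η, 1 / ((ξ * Real.exp η) ^ d + ξ ^ d) ∂μ = 1 / 2)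
    (η₀ : ℝ) (hη₀ : η₀ = Real.log (1 / ξ)) :
    μ {η : ℝ | η < η₀} = 0 ∧ μ {η₀} = 1 / 2 := by
  have hshift (η : ℝ) : ξ * Real.exp η = Real.exp (η - η₀) := by
    rw [Real.exp_sub, hη₀, Real.exp_log (by positivity)]
    field_simp
  have hr : Measurable fun η => ξ * Real.exp η := by fun_prop
  have hr0 (η : ℝ) : 0 ≤ ξ * Real.exp η := by positivity
  have hlt : {η | ξ * Real.exp η < 1} = {η | η < η₀} := by
    ext η; simp [hshift]
  have heq : {η | ξ * Real.exp η = 1} = {η₀} := by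
    ext η; simp [hshift, sub_eq_zero]
  refine ⟨hlt ▸ measure_setOf_lt_one_eq_zero hr hr0 hξ0 hξ1 fun d => (hint d).le, ?_⟩
  rw [← ofReal_measureReal, ← heq, measureReal_setOf_eq_one hr hr0 hξ0 hξ1 hint,
    ENNReal.ofReal_div_of_pos two_pos, ENNReal.ofReal_one, ENNReal.ofReal_ofNat]
end

section
/- Fix horizon T and two experts. For any balanced adversary distribution D (one for which, conditioned on any history, the expected one-step gain of both experts is equal), the regret equals (1/2)·E[|G₁(T) - G₂(T)|], where Gᵢ(T) is expert i's cumulative gain; and this is independent of the algorithm used. -/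
open Finset

/-- The {0,1}-valued gain of expert `i` at step `t` under gain sequence `ω`. -/
def gainOf {T : ℕ} (ω : Fin T → Fin 2 → Bool) (t : Fin T) (i : Fin 2) : ℝ :=
  if ω t i then 1 else 0

/-- Cumulative gain of expert `i` over the whole horizon. -/
def cumGain {T : ℕ} (ω : Fin T → Fin 2 → Bool) (i : Fin 2) : ℝ :=
  ∑ t, gainOf ω t i

theorem stmt_18 (T : ℕ)
    -- the adversary: a probability mass function over binary gain sequences
    (D : (Fin T → Fin 2 → Bool) → ℝ)
    (hD0 : ∀ ω, 0 ≤ D ω) (hD1 : ∑ ω, D ω = 1)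
    -- balanced: conditioned on any history (prefix), both experts have the same
    -- expected one-step gain
    (hbal : ∀ t : Fin T, ∀ h : Fin T → Fin 2 → Bool,
      ∑ ω ∈ univ.filter (fun ω => ∀ s : Fin T, s < t → ω s = h s),
        D ω * (gainOf ω t 0 - gainOf ω t 1) = 0)
    -- the algorithm: at each step a distribution over the two experts,
    -- depending only on the history
    (A : Fin T → (Fin T → Fin 2 → Bool) → Fin 2 → ℝ)
    (hA0 : ∀ t ω i, 0 ≤ A t ω i) (hA1 : ∀ t ω, ∑ i, A t ω i = 1)
    (hAhist : ∀ t : Fin T, ∀ ω ω' : Fin T → Fin 2 → Bool,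
      (∀ s : Fin T, s < t → ω s = ω' s) → A t ω = A t ω') :
    -- the regret equals (1/2)·E|G₁(T) − G₂(T)|, independently of the algorithm
    ∑ ω, D ω * (max (cumGain ω 0) (cumGain ω 1) - ∑ t, ∑ i, A t ω i * gainOf ω t i)
      = (1 / 2) * ∑ ω, D ω * |cumGain ω 0 - cumGain ω 1| := by
  classical
  -- key : for each step t the "bias" term vanishes
  have key : ∀ t : Fin T,
      ∑ ω, D ω * ((A t ω 0 - 1/2) * (gainOf ω t 0 - gainOf ω t 1)) = 0 := by
    intro t
    set π : (Fin T → Fin 2 → Bool) → (Fin T → Fin 2 → Bool) :=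
      fun ω s => if s < t then ω s else (fun _ => false) with hπ
    have hπlt : ∀ ω (s : Fin T), s < t → π ω s = ω s := by
      intro ω s hs; simp [hπ, hs]
    have hπge : ∀ ω (s : Fin T), ¬ s < t → π ω s = fun _ => false := by
      intro ω s hs; simp [hπ, hs]
    have hidem : ∀ ω, π (π ω) = π ω := by
      intro ω; funext s
      by_cases hs : s < t
      · rw [hπlt _ _ hs]
      · rw [hπge _ _ hs, hπge _ _ hs]
    rw [← Finset.sum_fiberwise univ π (fun ω => D ω * ((A t ω 0 - 1/2) * (gainOf ω t 0 - gainOf ω t 1)))]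
    apply Finset.sum_eq_zero
    intro h _
    have hAconst : ∀ ω ∈ univ.filter (fun ω => π ω = h),
        A t ω 0 = A t h 0 := by
      intro ω hω
      simp only [mem_filter] at hω
      have : A t ω = A t h := by
        apply hAhist
        intro s hs
        rw [← hω.2, hπlt _ _ hs]
      rw [this]
    calc ∑ ω ∈ univ.filter (fun ω => π ω = h),
            D ω * ((A t ω 0 - 1/2) * (gainOf ω t 0 - gainOf ω t 1))
        = (A t h 0 - 1/2) * ∑ ω ∈ univ.filter (fun ω => π ω = h),
            D ω * (gainOf ω t 0 - gainOf ω t 1) := by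
          rw [Finset.mul_sum]
          apply Finset.sum_congr rfl
          intro ω hω
          rw [hAconst ω hω]; ring
      _ = 0 := by
          by_cases hc : π h = h
          · have hset : univ.filter (fun ω => π ω = h)
                = univ.filter (fun ω => ∀ s : Fin T, s < t → ω s = h s) := by
              apply Finset.filter_congr
              intro ω _
              constructor
              · intro he s hs
                rw [← he, hπlt _ _ hs]
              · intro he
                funext s
                by_cases hs : s < t
                · rw [hπlt _ _ hs, he s hs]
                · rw [hπge _ _ hs, ← hc, hπge _ _ hs]
            rw [hset, hbal t h, mul_zero]
          · have hempty : univ.filter (fun ω => π ω = h) = ∅ := by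
              apply Finset.filter_eq_empty_iff.2
              intro ω _ he
              exact hc (by rw [← he, hidem])
            rw [hempty, Finset.sum_empty, mul_zero]
  -- per-ω decomposition
  have hω : ∀ ω : Fin T → Fin 2 → Bool,
      D ω * (max (cumGain ω 0) (cumGain ω 1) - ∑ t, ∑ i, A t ω i * gainOf ω t i)
        = 1/2 * (D ω * |cumGain ω 0 - cumGain ω 1|)
          - ∑ t, D ω * ((A t ω 0 - 1/2) * (gainOf ω t 0 - gainOf ω t 1)) := by
    intro ω
    have hmax : max (cumGain ω 0) (cumGain ω 1)
        = (cumGain ω 0 + cumGain ω 1) / 2 + |cumGain ω 0 - cumGain ω 1| / 2 := by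
      rcases le_total (cumGain ω 0) (cumGain ω 1) with hle | hle
      · rw [max_eq_right hle, abs_of_nonpos (by linarith)]; ring
      · rw [max_eq_left hle, abs_of_nonneg (by linarith)]; ring
    have halg : ∑ t, ∑ i, A t ω i * gainOf ω t i
        = (cumGain ω 0 + cumGain ω 1) / 2
          + ∑ t, ((A t ω 0 - 1/2) * (gainOf ω t 0 - gainOf ω t 1)) := by
      unfold cumGain
      rw [← Finset.sum_add_distrib, Finset.sum_div, ← Finset.sum_add_distrib]
      apply Finset.sum_congr rfl
      intro t _
      have h2 : A t ω 0 + A t ω 1 = 1 := by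
        have := hA1 t ω
        rwa [Fin.sum_univ_two] at this
      have h3 : A t ω 1 = 1 - A t ω 0 := by linarith
      rw [Fin.sum_univ_two, h3]; ring
    rw [hmax, halg, ← Finset.mul_sum]
    ring
  rw [Finset.sum_congr rfl (fun ω _ => hω ω), Finset.sum_sub_distrib,
    Finset.sum_comm, Finset.sum_congr rfl (fun t (_ : t ∈ univ) => key t),
    Finset.sum_const_zero, sub_zero, ← Finset.mul_sum]
end
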